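/- arXiv:1506.06933 — 2 statements merged into one kernel-verified Lean document; each statement's English description precedes it below -/
import Mathlib

section
/- Completeness of J_CS: for every constant specification CS for J and every formula A, if A is not derivable in the Hilbert system J_CS then there exists a Fitting model M for J_CS and a world w in M such that M,w ⊮ A. -/
namespace JustificationLogic

/-- Justification terms: constants, variables, application, sum, and proof checker `!`. -/
inductive Term : Type
  | const : ℕ → Term
  | var : ℕ → Term
  | app : Term → Term → Term
  | sum : Term → Term → Term
  | bang : Term → Term
  deriving DecidableEq

/-- Formulas of justification logic: atoms, negation, implication, and `t : A`. -/
inductive Formula : Type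
  | atom : ℕ → Formula
  | neg : Formula → Formula
  | impl : Formula → Formula → Formula
  | just : Term → Formula → Formula
  deriving DecidableEq

/-- Disjunction, defined classically: `A ∨ B := ¬A → B`. -/
def Formula.or (A B : Formula) : Formula := (Formula.neg A).impl B

/-- Falsum, defined as the negation of a propositional tautology. -/
def Formula.falsum : Formula := Formula.neg ((Formula.atom 0).impl (Formula.atom 0))

/-- Number of symbols of a term. -/
def Term.size : Term → ℕ
  | .const _ => 1
  | .var _ => 1
  | .app s t => s.size + t.size + 1
  | .sum s t => s.size + t.size + 1
  | .bang t => t.size + 1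

/-- Number of symbols of a formula. -/
def Formula.size : Formula → ℕ
  | .atom _ => 1
  | .neg A => A.size + 1
  | .impl A B => A.size + B.size + 1
  | .just t A => t.size + A.size + 1

/-- An explicit numerical code for terms (an injective Gödel numbering). -/
def Term.code : Term → ℕ
  | .const n => Nat.pair 0 n
  | .var n => Nat.pair 1 n
  | .app s t => Nat.pair 2 (Nat.pair s.code t.code)
  | .sum s t => Nat.pair 3 (Nat.pair s.code t.code)
  | .bang t => Nat.pair 4 t.code

/-- An explicit numerical code for formulas (an injective Gödel numbering). -/
def Formula.code : Formula → ℕ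
  | .atom n => Nat.pair 0 n
  | .neg A => Nat.pair 1 A.code
  | .impl A B => Nat.pair 2 (Nat.pair A.code B.code)
  | .just t A => Nat.pair 3 (Nat.pair t.code A.code)

/-- Substitution of terms for term variables. -/
def Term.subst (σ : ℕ → Term) : Term → Term
  | .const n => .const n
  | .var n => σ n
  | .app s t => .app (s.subst σ) (t.subst σ)
  | .sum s t => .sum (s.subst σ) (t.subst σ)
  | .bang t => .bang (t.subst σ)

/-- Simultaneous substitution of terms for term variables and formulas for atoms. -/
def Formula.subst (σ : ℕ → Term) (τ : ℕ → Formula) : Formula → Formula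
  | .atom n => τ n
  | .neg A => .neg (A.subst σ τ)
  | .impl A B => .impl (A.subst σ τ) (B.subst σ τ)
  | .just t A => .just (t.subst σ) (A.subst σ τ)

/-- `towerT c n = !ⁿc`. -/
def towerT (c : Term) : ℕ → Term
  | 0 => c
  | n + 1 => Term.bang (towerT c n)

/-- `towerF c A n = !ⁿ⁻¹c : ⋯ : !c : c : A` (and `A` for `n = 0`), so that
`(towerT c n) : (towerF c A n)` is the `n`-th formula produced by the rule (AN!). -/
def towerF (c : Term) (A : Formula) : ℕ → Formula
  | 0 => A
  | n + 1 => Formula.just (towerT c n) (towerF c A n)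

/-- The axioms of the justification logics considered, with switches `hd`, `ht`, `h4`
for the axioms (jd), (jt), (j4).  The propositional part (A1) is given by three
standard Hilbert-style schemes axiomatizing classical propositional logic. -/
inductive Ax (hd ht h4 : Bool) : Formula → Prop
  | k (A B : Formula) : Ax hd ht h4 (A.impl (B.impl A))
  | s (A B C : Formula) :
      Ax hd ht h4 ((A.impl (B.impl C)).impl ((A.impl B).impl (A.impl C)))
  | dn (A B : Formula) :
      Ax hd ht h4 (((A.neg).impl (B.neg)).impl (B.impl A))
  | a2 (t s : Term) (A B : Formula) :
      Ax hd ht h4 ((Formula.just t (A.impl B)).impl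
        ((Formula.just s A).impl (Formula.just (Term.app t s) B)))
  | a3 (t s : Term) (A : Formula) :
      Ax hd ht h4 (((Formula.just t A).or (Formula.just s A)).impl
        (Formula.just (Term.sum t s) A))
  | jd (t : Term) : hd = true →
      Ax hd ht h4 ((Formula.just t Formula.falsum).impl Formula.falsum)
  | jt (t : Term) (A : Formula) : ht = true →
      Ax hd ht h4 ((Formula.just t A).impl A)
  | j4 (t : Term) (A : Formula) : h4 = true →
      Ax hd ht h4 ((Formula.just t A).impl
        (Formula.just (Term.bang t) (Formula.just t A)))

/-- Axioms of the respective logics. -/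
def AxJ : Formula → Prop := Ax false false false
def AxJT : Formula → Prop := Ax false true false
def AxJD : Formula → Prop := Ax true false false
def AxJ4 : Formula → Prop := Ax false false true
def AxJD4 : Formula → Prop := Ax true false true
def AxLP : Formula → Prop := Ax false true true

/-- `CS` is a constant specification for the logic with axioms `Axm`:
every member of `CS` is of the form `c : A` with `c` a constant and `A` an axiom. -/
def ConstSpec (Axm : Formula → Prop) (CS : Set Formula) : Prop :=
  ∀ F ∈ CS, ∃ (c : ℕ) (A : Formula), F = Formula.just (Term.const c) A ∧ Axm A

/-- `CS` is axiomatically appropriate for axioms `Axm`: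
for every axiom `A` there is a constant `c` with `c : A ∈ CS`. -/
def AxApprop (Axm : Formula → Prop) (CS : Set Formula) : Prop :=
  ∀ A : Formula, Axm A → ∃ c : ℕ, Formula.just (Term.const c) A ∈ CS

/-- `CS` is schematic: the set of axioms justified by a given constant consists of
axiom schemes, i.e. it is closed under simultaneous substitution of terms for term
variables and formulas for atomic propositions. -/
def Schematic (CS : Set Formula) : Prop :=
  ∀ (c : ℕ) (A : Formula), Formula.just (Term.const c) A ∈ CS →
    ∀ (σ : ℕ → Term) (τ : ℕ → Formula),
      Formula.just (Term.const c) (A.subst σ τ) ∈ CS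

/-- `CS` is decidable: some computable function decides membership in `CS`
(via the explicit Gödel numbering of formulas). -/
def DecidableCS (CS : Set Formula) : Prop :=
  ∃ C : ℕ → Bool, Computable C ∧ ∀ F : Formula, F ∈ CS ↔ C F.code = true

/-- Hilbert-style derivability with the iterated axiom necessitation rule (AN!):
from `c : A ∈ CS` infer `!ⁿc : !ⁿ⁻¹c : ⋯ : !c : c : A` for every `n ≥ 0`. -/
inductive DerivB (Axm : Formula → Prop) (CS : Set Formula) : Formula → Prop
  | ax {A : Formula} : Axm A → DerivB Axm CS A
  | mp {A B : Formula} : DerivB Axm CS (A.impl B) → DerivB Axm CS A → DerivB Axm CS B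
  | an (c : ℕ) (A : Formula) (n : ℕ) :
      Formula.just (Term.const c) A ∈ CS →
      DerivB Axm CS (Formula.just (towerT (Term.const c) n) (towerF (Term.const c) A n))

/-- Hilbert-style derivability with the simple axiom necessitation rule (AN):
from `c : A ∈ CS` infer `c : A`. -/
inductive DerivS (Axm : Formula → Prop) (CS : Set Formula) : Formula → Prop
  | ax {A : Formula} : Axm A → DerivS Axm CS A
  | mp {A B : Formula} : DerivS Axm CS (A.impl B) → DerivS Axm CS A → DerivS Axm CS B
  | an (c : ℕ) (A : Formula) :
      Formula.just (Term.const c) A ∈ CS →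
      DerivS Axm CS (Formula.just (Term.const c) A)

/-- A structure for Fitting models: a nonempty set of worlds, an accessibility
relation, an evidence relation and a valuation. -/
structure Model : Type 1 where
  World : Type
  nonempty : Nonempty World
  R : World → World → Prop
  E : Term → Formula → World → Prop
  val : ℕ → World → Prop

/-- The satisfaction relation `M, w ⊩ A`. -/
def Sat (M : Model) : Formula → M.World → Prop
  | .atom n, w => M.val n w
  | .neg A, w => ¬ Sat M A w
  | .impl A B, w => Sat M A w → Sat M B w
  | .just t A, w => M.E t A w ∧ ∀ v : M.World, M.R w v → Sat M A v

/-- The evidence relation of a model, as a set of triples. -/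
def EvSet (M : Model) : Set (Term × Formula × M.World) :=
  {x | M.E x.1 x.2.1 x.2.2}

/-- The graph of the valuation: the set `{(w, p) | w ∈ ν(p)}`. -/
def ValSet (M : Model) : Set (M.World × ℕ) :=
  {p | M.val p.2 p.1}

/-- Seriality of a relation: every world has a successor. -/
def Serial {W : Type} (R : W → W → Prop) : Prop := ∀ w : W, ∃ v : W, R w v

/-- Admissible evidence relation for the logics without the (j4) axiom:
closure under sum and application, and the constant specification condition
with iterated `!`. -/
def AdmissibleBang (CS : Set Formula) {W : Type}
    (E : Set (Term × Formula × W)) : Prop :=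
  (∀ (s t : Term) (A : Formula) (w : W),
      ((s, A, w) ∈ E ∨ (t, A, w) ∈ E) → (Term.sum s t, A, w) ∈ E) ∧
  (∀ (s t : Term) (A B : Formula) (w : W),
      (s, A.impl B, w) ∈ E → (t, A, w) ∈ E → (Term.app s t, B, w) ∈ E) ∧
  (∀ (c : ℕ) (A : Formula) (w : W) (n : ℕ),
      Formula.just (Term.const c) A ∈ CS →
      (towerT (Term.const c) n, towerF (Term.const c) A n, w) ∈ E)

/-- Admissible evidence relation for the logics with the (j4) axiom:
closure under sum and application, the simple constant specification condition,
closure under `!`, and monotonicity along the accessibility relation. -/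
def AdmissibleJ4 (CS : Set Formula) {W : Type} (R : W → W → Prop)
    (E : Set (Term × Formula × W)) : Prop :=
  (∀ (s t : Term) (A : Formula) (w : W),
      ((s, A, w) ∈ E ∨ (t, A, w) ∈ E) → (Term.sum s t, A, w) ∈ E) ∧
  (∀ (s t : Term) (A B : Formula) (w : W),
      (s, A.impl B, w) ∈ E → (t, A, w) ∈ E → (Term.app s t, B, w) ∈ E) ∧
  (∀ (c : ℕ) (A : Formula) (w : W),
      Formula.just (Term.const c) A ∈ CS → (Term.const c, A, w) ∈ E) ∧
  (∀ (t : Term) (A : Formula) (w : W),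
      (t, A, w) ∈ E → (Term.bang t, Formula.just t A, w) ∈ E) ∧
  (∀ (t : Term) (A : Formula) (w v : W),
      (t, A, w) ∈ E → R w v → (t, A, v) ∈ E)

/-- `M` is a Fitting model for `J_CS`. -/
def IsModelJ (CS : Set Formula) (M : Model) : Prop :=
  AdmissibleBang CS (EvSet M)

/-- `M` is a Fitting model for `JT_CS`: additionally `R` is reflexive. -/
def IsModelJT (CS : Set Formula) (M : Model) : Prop :=
  Reflexive M.R ∧ AdmissibleBang CS (EvSet M)

/-- `M` is a Fitting model for `JD_CS`: additionally `R` is serial. -/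
def IsModelJD (CS : Set Formula) (M : Model) : Prop :=
  Serial M.R ∧ AdmissibleBang CS (EvSet M)

/-- `M` is a Fitting model for `J4_CS`: `R` is transitive. -/
def IsModelJ4 (CS : Set Formula) (M : Model) : Prop :=
  Transitive M.R ∧ AdmissibleJ4 CS M.R (EvSet M)

/-- `M` is a Fitting model for `JD4_CS`: `R` is serial and transitive. -/
def IsModelJD4 (CS : Set Formula) (M : Model) : Prop :=
  Serial M.R ∧ Transitive M.R ∧ AdmissibleJ4 CS M.R (EvSet M)

/-- `M` is a Fitting model for `LP_CS`: `R` is reflexive and transitive. -/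
def IsModelLP (CS : Set Formula) (M : Model) : Prop :=
  Reflexive M.R ∧ Transitive M.R ∧ AdmissibleJ4 CS M.R (EvSet M)

/-- `B` is a base for the evidence relation of `M`, and that evidence relation is
minimal (least) among the admissible ones (non-(j4) version) containing `B`. -/
def MinBaseBang (CS : Set Formula) (M : Model)
    (B : Set (Term × Formula × M.World)) : Prop :=
  B ⊆ EvSet M ∧
  ∀ E' : Set (Term × Formula × M.World),
    AdmissibleBang CS E' → B ⊆ E' → EvSet M ⊆ E'

/-- `B` is a base for the evidence relation of `M`, and that evidence relation is
minimal (least) among the admissible ones ((j4) version) containing `B`. -/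
def MinBaseJ4 (CS : Set Formula) (M : Model)
    (B : Set (Term × Formula × M.World)) : Prop :=
  B ⊆ EvSet M ∧
  ∀ E' : Set (Term × Formula × M.World),
    AdmissibleJ4 CS M.R E' → B ⊆ E' → EvSet M ⊆ E'

/-- `M` is finitary (non-(j4) version): finitely many worlds, the evidence relation
is the minimal admissible one over some finite base, and the valuation has finite graph. -/
def FinitaryBang (CS : Set Formula) (M : Model) : Prop :=
  Finite M.World ∧
  (∃ B : Set (Term × Formula × M.World), B.Finite ∧ MinBaseBang CS M B) ∧
  (ValSet M).Finite

/-- `M` is finitary ((j4) version): finitely many worlds, the evidence relation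
is the minimal admissible one over some finite base, and the valuation has finite graph. -/
def FinitaryJ4 (CS : Set Formula) (M : Model) : Prop :=
  Finite M.World ∧
  (∃ B : Set (Term × Formula × M.World), B.Finite ∧ MinBaseJ4 CS M B) ∧
  (ValSet M).Finite

/-!
The canonical model: worlds are the maximal consistent sets Δ of `J_CS`, `t` is evidence for
`B` at Δ iff `t : B ∈ Δ`, and Δ sees Δ' iff Δ' contains every `B` with some `t : B ∈ Δ`.
Deductive closure of Δ turns axioms (A2), (A3) and the rule (AN!) into the closure
conditions on evidence, and the truth lemma `M, Δ ⊩ B ↔ B ∈ Δ` holds by induction on `B`.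
If `A` is not derivable then `{¬A}` is consistent, and a maximal consistent extension
(Lindenbaum) is a world refuting `A`.
-/

/-- Hypotheses are added as further axioms; in particular (AN!) does not apply to them. -/
abbrev DerivFrom (Axm : Formula → Prop) (CS Γ : Set Formula) : Formula → Prop :=
  DerivB (fun B => Axm B ∨ B ∈ Γ) CS

def Consistent (Axm : Formula → Prop) (CS Γ : Set Formula) : Prop :=
  ¬ DerivFrom Axm CS Γ Formula.falsum

abbrev MaximalConsistent (Axm : Formula → Prop) (CS Δ : Set Formula) : Prop :=
  Maximal (Consistent Axm CS) Δ

section Derivations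

variable {Axm Axm' : Formula → Prop} {CS Γ Δ : Set Formula} {A : Formula}

theorem DerivB.mono_axioms (hAx : ∀ B, Axm B → Axm' B) (h : DerivB Axm CS A) :
    DerivB Axm' CS A := by
  induction h with
  | ax h => exact .ax (hAx _ h)
  | mp _ _ ih₁ ih₂ => exact .mp ih₁ ih₂
  | an c A n h => exact .an c A n h

namespace DerivFrom

theorem hyp (h : A ∈ Γ) : DerivFrom Axm CS Γ A := .ax (.inr h)

theorem of_derivB (h : DerivB Axm CS A) : DerivFrom Axm CS Γ A :=
  h.mono_axioms fun _ => .inl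

theorem derivB_of_empty (h : DerivFrom Axm CS ∅ A) : DerivB Axm CS A :=
  h.mono_axioms fun B hB => hB.resolve_right (Set.notMem_empty B)

theorem mono (hΓ : Γ ⊆ Δ) (h : DerivFrom Axm CS Γ A) : DerivFrom Axm CS Δ A :=
  h.mono_axioms fun _ => Or.imp_right (@hΓ _)

theorem exists_finite (h : DerivFrom Axm CS Γ A) :
    ∃ Γ₀ ⊆ Γ, Γ₀.Finite ∧ DerivFrom Axm CS Γ₀ A := by
  induction h with
  | @ax B hB =>
    rcases hB with hB | hB
    · exact ⟨∅, Set.empty_subset _, Set.finite_empty, .ax (.inl hB)⟩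
    · exact ⟨{B}, Set.singleton_subset_iff.mpr hB, Set.finite_singleton B, hyp rfl⟩
  | mp _ _ ih₁ ih₂ =>
    obtain ⟨Γ₁, hΓ₁, hfin₁, h₁⟩ := ih₁
    obtain ⟨Γ₂, hΓ₂, hfin₂, h₂⟩ := ih₂
    exact ⟨Γ₁ ∪ Γ₂, Set.union_subset hΓ₁ hΓ₂, hfin₁.union hfin₂,
      .mp (h₁.mono Set.subset_union_left) (h₂.mono Set.subset_union_right)⟩
  | an c A n h => exact ⟨∅, Set.empty_subset _, Set.finite_empty, .an c A n h⟩

end DerivFrom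

theorem isOfFiniteCharacter_consistent :
    Order.IsOfFiniteCharacter {Γ | Consistent Axm CS Γ} := by
  refine fun Γ => ⟨fun hΓ Γ₀ hΓ₀ _ h => hΓ (h.mono hΓ₀), fun hfin h => ?_⟩
  obtain ⟨Γ₀, hΓ₀, hfin₀, h₀⟩ := h.exists_finite
  exact hfin Γ₀ hΓ₀ hfin₀ h₀

theorem exists_maximalConsistent_superset (h : Consistent Axm CS Γ) :
    ∃ Δ, Γ ⊆ Δ ∧ MaximalConsistent Axm CS Δ :=
  isOfFiniteCharacter_consistent.exists_maximal h

end Derivations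

section Propositional

variable {hd ht h4 : Bool} {CS Γ Δ : Set Formula} {A B C : Formula}

namespace DerivFrom

theorem imp_self : DerivFrom (Ax hd ht h4) CS Γ (A.impl A) :=
  .mp (.mp (.ax (.inl (.s A (A.impl A) A))) (.ax (.inl (.k A (A.impl A)))))
    (.ax (.inl (.k A A)))

theorem deduction (h : DerivFrom (Ax hd ht h4) CS (insert A Γ) B) :
    DerivFrom (Ax hd ht h4) CS Γ (A.impl B) := by
  induction h with
  | @ax B hB =>
    rcases hB with hB | rfl | hB
    · exact .mp (.ax (.inl (.k B A))) (.ax (.inl hB))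
    · exact imp_self
    · exact .mp (.ax (.inl (.k B A))) (hyp hB)
  | @mp C D _ _ ih₁ ih₂ => exact .mp (.mp (.ax (.inl (.s A C D))) ih₁) ih₂
  | an c B n h => exact .mp (.ax (.inl (.k _ A))) (.an c B n h)

theorem absurd (h : DerivFrom (Ax hd ht h4) CS Γ A) (hn : DerivFrom (Ax hd ht h4) CS Γ A.neg) :
    DerivFrom (Ax hd ht h4) CS Γ B :=
  .mp (.mp (.ax (.inl (.dn B A))) (.mp (.ax (.inl (.k A.neg B.neg))) hn)) h

/-- Since `falsum` is `¬(p₀ → p₀)`, axiom (dn) turns `¬A → falsum` into `(p₀ → p₀) → A`. -/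
theorem of_insert_neg (h : DerivFrom (Ax hd ht h4) CS (insert A.neg Γ) Formula.falsum) :
    DerivFrom (Ax hd ht h4) CS Γ A :=
  .mp (.mp (.ax (.inl (.dn A _))) (deduction h)) imp_self

theorem neg_of_insert (h : DerivFrom (Ax hd ht h4) CS (insert A Γ) Formula.falsum) :
    DerivFrom (Ax hd ht h4) CS Γ A.neg := by
  have hA : DerivFrom (Ax hd ht h4) CS (insert A.neg.neg Γ) A :=
    of_insert_neg (absurd (hyp (.inl rfl)) (hyp (.inr (.inl rfl))))
  exact of_insert_neg (.mp ((deduction h).mono (Set.subset_insert _ _)) hA)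

end DerivFrom

namespace MaximalConsistent

open DerivFrom

theorem mem_of_derivFrom (hΔ : MaximalConsistent (Ax hd ht h4) CS Δ)
    (h : DerivFrom (Ax hd ht h4) CS Δ B) : B ∈ Δ :=
  hΔ.mem_of_prop_insert fun hB => hΔ.prop (.mp (deduction hB) h)

theorem mem_of_derivB (hΔ : MaximalConsistent (Ax hd ht h4) CS Δ)
    (h : DerivB (Ax hd ht h4) CS B) : B ∈ Δ :=
  hΔ.mem_of_derivFrom (of_derivB h)

theorem neg_mem_iff (hΔ : MaximalConsistent (Ax hd ht h4) CS Δ) : B.neg ∈ Δ ↔ B ∉ Δ := by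
  refine ⟨fun hn hB => hΔ.prop (absurd (hyp hB) (hyp hn)), fun hB => ?_⟩
  exact hΔ.mem_of_derivFrom (neg_of_insert (by_contra fun h => hB (hΔ.mem_of_prop_insert h)))

theorem impl_mem_iff (hΔ : MaximalConsistent (Ax hd ht h4) CS Δ) :
    B.impl C ∈ Δ ↔ (B ∈ Δ → C ∈ Δ) := by
  refine ⟨fun h hB => hΔ.mem_of_derivFrom (.mp (hyp h) (hyp hB)), fun h => ?_⟩
  by_cases hB : B ∈ Δ
  · exact hΔ.mem_of_derivFrom (.mp (.ax (.inl (.k C B))) (hyp (h hB)))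
  · have hnB : B.neg ∈ Δ := hΔ.neg_mem_iff.mpr hB
    exact hΔ.mem_of_derivFrom (deduction (absurd (hyp (.inl rfl)) (hyp (.inr hnB))))

theorem or_mem_iff (hΔ : MaximalConsistent (Ax hd ht h4) CS Δ) :
    B.or C ∈ Δ ↔ B ∈ Δ ∨ C ∈ Δ := by
  rw [Formula.or, hΔ.impl_mem_iff, hΔ.neg_mem_iff, or_iff_not_imp_left]

end MaximalConsistent

end Propositional

section CanonicalModel

variable (hd ht h4 : Bool) (CS : Set Formula)
  [Nonempty {Δ // MaximalConsistent (Ax hd ht h4) CS Δ}]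

def canonicalModel : Model where
  World := {Δ // MaximalConsistent (Ax hd ht h4) CS Δ}
  nonempty := inferInstance
  R Δ Δ' := ∀ t B, Formula.just t B ∈ Δ.1 → B ∈ Δ'.1
  E t B Δ := Formula.just t B ∈ Δ.1
  val n Δ := Formula.atom n ∈ Δ.1

theorem sat_canonicalModel_iff (B : Formula) (Δ : (canonicalModel hd ht h4 CS).World) :
    Sat (canonicalModel hd ht h4 CS) B Δ ↔ B ∈ Δ.1 := by
  induction B generalizing Δ with
  | atom n => rfl
  | neg B ih => rw [Sat, ih, Δ.2.neg_mem_iff]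
  | impl B C ihB ihC => rw [Sat, ihB, ihC, Δ.2.impl_mem_iff]
  | just t B ih =>
    exact ⟨And.left, fun h => ⟨h, fun Δ' hR => (ih Δ').mpr (hR t B h)⟩⟩

theorem isModelJ_canonicalModel : IsModelJ CS (canonicalModel hd ht h4 CS) := by
  refine ⟨fun s t B Δ h => ?_, fun s t B C Δ hst hs => ?_, fun c B Δ n hc => ?_⟩
  · exact (Δ.2.impl_mem_iff.mp (Δ.2.mem_of_derivB (.ax (.a3 s t B)))) (Δ.2.or_mem_iff.mpr h)
  · have ha2 := Δ.2.mem_of_derivB (.ax (.a2 s t B C))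
    exact Δ.2.impl_mem_iff.mp (Δ.2.impl_mem_iff.mp ha2 hst) hs
  · exact Δ.2.mem_of_derivB (.an c B n hc)

end CanonicalModel

theorem completeness_J_general (CS : Set Formula) (A : Formula)
    (hA : ¬ DerivB AxJ CS A) :
    ∃ M : Model, IsModelJ CS M ∧ ∃ w : M.World, ¬ Sat M A w := by
  have hcons : Consistent (Ax false false false) CS (insert A.neg ∅) := fun h =>
    hA (DerivFrom.of_insert_neg h).derivB_of_empty
  obtain ⟨Δ, hAΔ, hΔ⟩ := exists_maximalConsistent_superset hcons
  have : Nonempty {Δ // MaximalConsistent (Ax false false false) CS Δ} := ⟨⟨Δ, hΔ⟩⟩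
  refine ⟨canonicalModel false false false CS, isModelJ_canonicalModel .., ⟨Δ, hΔ⟩, ?_⟩
  exact mt (sat_canonicalModel_iff ..).mp (hΔ.neg_mem_iff.mp (hAΔ (Set.mem_insert _ _)))

/-- Completeness of `J_CS`: if a formula is not derivable in the Hilbert system
`J_CS` (with constant specification `CS`), then it fails at some world
of some Fitting model for `J_CS`. -/
theorem completeness_J (CS : Set Formula) (hCS : ConstSpec AxJ CS) (A : Formula)
    (hA : ¬ DerivB AxJ CS A) :
    ∃ M : Model, IsModelJ CS M ∧ ∃ w : M.World, ¬ Sat M A w :=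
  completeness_J_general CS A hA

end JustificationLogic
end

section
/- Completeness of J_CS with respect to finitary models: for every constant specification CS for J and every formula A, if A is not derivable in the Hilbert system J_CS then there exists a finitary Fitting model M for J_CS and a world w in M such that M,w ⊮ A. -/
namespace JustificationLogic

section FinCompleteness

variable (CS : Set Formula)

/-- Derivability from a set of hypotheses. -/
inductive Dv (Γ : Set Formula) : Formula → Prop
  | ax {A : Formula} : AxJ A → Dv Γ A
  | hyp {A : Formula} : A ∈ Γ → Dv Γ A
  | mp {A B : Formula} : Dv Γ (A.impl B) → Dv Γ A → Dv Γ B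
  | an (c : ℕ) (A : Formula) (n : ℕ) :
      Formula.just (Term.const c) A ∈ CS →
      Dv Γ (Formula.just (towerT (Term.const c) n) (towerF (Term.const c) A n))

theorem Dv.mono {Γ Δ : Set Formula} {B : Formula} (h : Dv CS Γ B) (hs : Γ ⊆ Δ) :
    Dv CS Δ B := by
  induction h with
  | ax h => exact .ax h
  | hyp h => exact .hyp (hs h)
  | mp _ _ ih1 ih2 => exact .mp ih1 ih2
  | an c A n h => exact .an c A n h

theorem Dv.toDerivB {B : Formula} (h : Dv CS ∅ B) : DerivB AxJ CS B := by
  induction h with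
  | ax h => exact .ax h
  | hyp h => exact absurd h (Set.notMem_empty _)
  | mp _ _ ih1 ih2 => exact .mp ih1 ih2
  | an c A n h => exact .an c A n h

theorem Dv.id {Γ : Set Formula} (A : Formula) : Dv CS Γ (A.impl A) :=
  .mp (.mp (.ax (Ax.s A (A.impl A) A)) (.ax (Ax.k A (A.impl A)))) (.ax (Ax.k A A))

theorem Dv.deduction {Γ : Set Formula} {A B : Formula}
    (h : Dv CS (insert A Γ) B) : Dv CS Γ (A.impl B) := by
  induction h with
  | @ax B h => exact .mp (.ax (Ax.k B A)) (.ax h)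
  | @hyp B h =>
    rcases h with h | h
    · subst h; exact Dv.id CS _
    · exact .mp (.ax (Ax.k B A)) (.hyp h)
  | @mp X Y _ _ ih1 ih2 => exact .mp (.mp (.ax (Ax.s A X Y)) ih1) ih2
  | an c A' n h => exact .mp (.ax (Ax.k _ A)) (.an c A' n h)

/-- Ex falso: `¬B → (B → C)`. -/
theorem Dv.efq {Γ : Set Formula} (B C : Formula) :
    Dv CS Γ (B.neg.impl (B.impl C)) := by
  apply Dv.deduction
  apply Dv.deduction
  have hnB : Dv CS (insert B (insert B.neg Γ)) B.neg :=
    .hyp (Set.mem_insert_of_mem _ (Set.mem_insert _ _))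
  have h1 : Dv CS (insert B (insert B.neg Γ)) (C.neg.impl B.neg) :=
    .mp (.ax (Ax.k B.neg C.neg)) hnB
  exact .mp (.mp (.ax (Ax.dn C B)) h1) (.hyp (Set.mem_insert _ _))

/-- The tautology `p₀ → p₀` whose negation is `falsum`. -/
theorem Dv.taut {Γ : Set Formula} :
    Dv CS Γ ((Formula.atom 0).impl (Formula.atom 0)) := Dv.id CS _

/-- Double negation elimination. -/
theorem Dv.dne {Γ : Set Formula} (B : Formula) : Dv CS Γ (B.neg.neg.impl B) := by
  apply Dv.deduction
  have h1 : Dv CS (insert B.neg.neg Γ) (B.neg.impl Formula.falsum) :=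
    .mp (Dv.efq CS B.neg Formula.falsum) (.hyp (Set.mem_insert _ _))
  exact .mp (.mp (.ax (Ax.dn B ((Formula.atom 0).impl (Formula.atom 0)))) h1) (Dv.taut CS)

theorem Dv.negIntro {Γ : Set Formula} {B : Formula}
    (h : Dv CS Γ (B.impl Formula.falsum)) : Dv CS Γ B.neg := by
  have h1 : Dv CS (insert B.neg.neg Γ) Formula.falsum :=
    .mp (Dv.mono CS h (Set.subset_insert _ _))
      (.mp (Dv.dne CS B) (.hyp (Set.mem_insert _ _)))
  exact .mp (.mp (.ax (Ax.dn B.neg ((Formula.atom 0).impl (Formula.atom 0))))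
    (Dv.deduction CS h1)) (Dv.taut CS)

theorem Dv.finChar {Γ : Set Formula} {B : Formula} (h : Dv CS Γ B) :
    ∃ Δ : Set Formula, Δ.Finite ∧ Δ ⊆ Γ ∧ Dv CS Δ B := by
  induction h with
  | @ax B h => exact ⟨∅, Set.finite_empty, Set.empty_subset _, .ax h⟩
  | @hyp B h => exact ⟨{B}, Set.finite_singleton _, Set.singleton_subset_iff.2 h,
      .hyp rfl⟩
  | mp _ _ ih1 ih2 =>
    obtain ⟨Δ1, hf1, hs1, hd1⟩ := ih1
    obtain ⟨Δ2, hf2, hs2, hd2⟩ := ih2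
    exact ⟨Δ1 ∪ Δ2, hf1.union hf2, Set.union_subset hs1 hs2,
      .mp (Dv.mono CS hd1 Set.subset_union_left) (Dv.mono CS hd2 Set.subset_union_right)⟩
  | an c A n h => exact ⟨∅, Set.finite_empty, Set.empty_subset _, .an c A n h⟩

/-- Consistency of a set of hypotheses. -/
def Con (Γ : Set Formula) : Prop := ¬ Dv CS Γ Formula.falsum

theorem chain_bound {c : Set (Set Formula)} (hc : IsChain (· ⊆ ·) c)
    (hne : c.Nonempty) {Δ : Set Formula} (hfin : Δ.Finite) (hsub : Δ ⊆ ⋃₀ c) :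
    ∃ s ∈ c, Δ ⊆ s := by
  obtain ⟨F, rfl⟩ := hfin.exists_finset_coe
  classical
  clear hfin
  revert hsub
  induction F using Finset.induction_on with
  | empty => exact fun _ => ⟨hne.choose, hne.choose_spec, by simp⟩
  | @insert a F ha ih =>
    intro hsub
    obtain ⟨s, hs, hFs⟩ := ih (by
      intro x hx; exact hsub (by simp [hx]))
    obtain ⟨t, ht, hat⟩ := hsub (by simp : a ∈ (↑(insert a F) : Set Formula))
    rcases eq_or_ne s t with rfl | hst
    · exact ⟨s, hs, by rw [Finset.coe_insert]; exact Set.insert_subset hat hFs⟩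
    rcases hc hs ht hst with h | h
    · exact ⟨t, ht, by rw [Finset.coe_insert]; exact Set.insert_subset hat (hFs.trans h)⟩
    · exact ⟨s, hs, by rw [Finset.coe_insert]; exact Set.insert_subset (h hat) hFs⟩

theorem lindenbaum {Γ₀ : Set Formula} (h0 : Con CS Γ₀) :
    ∃ Γ, Γ₀ ⊆ Γ ∧ Maximal (Con CS) Γ := by
  apply zorn_subset_nonempty (Con CS) ?_ Γ₀ h0
  intro c hc hchain hne
  refine ⟨⋃₀ c, ?_, fun s hs => Set.subset_sUnion_of_mem hs⟩
  intro hder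
  obtain ⟨Δ, hfin, hsub, hd⟩ := Dv.finChar CS hder
  obtain ⟨s, hs, hΔs⟩ := chain_bound hchain hne hfin hsub
  exact hc hs (Dv.mono CS hd hΔs)

section MaxCon

variable {CS} {Γ : Set Formula} (hm : Maximal (Con CS) Γ)

include hm

theorem MaxCon.closed {B : Formula} (h : Dv CS Γ B) : B ∈ Γ := by
  by_cases hmem : Con CS (insert B Γ)
  · exact hm.2 hmem (Set.subset_insert _ _) (Set.mem_insert _ _)
  · exfalso
    apply hm.1
    simp only [Con, not_not] at hmem
    exact .mp (Dv.deduction CS hmem) h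

theorem MaxCon.total {B : Formula} (h : B ∉ Γ) : B.neg ∈ Γ := by
  by_cases hmem : Con CS (insert B Γ)
  · exact absurd (hm.2 hmem (Set.subset_insert _ _) (Set.mem_insert _ _)) h
  · simp only [Con, not_not] at hmem
    exact MaxCon.closed hm (Dv.negIntro CS (Dv.deduction CS hmem))

theorem MaxCon.noContra {B : Formula} (h : B ∈ Γ) (hn : B.neg ∈ Γ) : False :=
  hm.1 (.mp (.mp (Dv.efq CS B Formula.falsum) (.hyp hn)) (.hyp h))

theorem MaxCon.neg_iff {B : Formula} : B.neg ∈ Γ ↔ B ∉ Γ :=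
  ⟨fun hn h => MaxCon.noContra hm h hn, MaxCon.total hm⟩

theorem MaxCon.impl_iff {B C : Formula} :
    B.impl C ∈ Γ ↔ (B ∈ Γ → C ∈ Γ) := by
  constructor
  · exact fun h hB => MaxCon.closed hm (.mp (.hyp h) (.hyp hB))
  · intro h
    by_cases hB : B ∈ Γ
    · exact MaxCon.closed hm (.mp (.ax (Ax.k C B)) (.hyp (h hB)))
    · exact MaxCon.closed hm
        (.mp (Dv.efq CS B C) (.hyp (MaxCon.total hm hB)))

end MaxCon

/-- The minimal evidence closure of a set of term–formula pairs. -/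
inductive Cl (P : Set (Term × Formula)) : Term → Formula → Prop
  | base {t : Term} {A : Formula} : (t, A) ∈ P → Cl P t A
  | sumL {s t : Term} {A : Formula} : Cl P s A → Cl P (Term.sum s t) A
  | sumR {s t : Term} {A : Formula} : Cl P t A → Cl P (Term.sum s t) A
  | app {s t : Term} {A B : Formula} :
      Cl P s (A.impl B) → Cl P t A → Cl P (Term.app s t) B
  | an (c : ℕ) (A : Formula) (n : ℕ) :
      Formula.just (Term.const c) A ∈ CS →
      Cl P (towerT (Term.const c) n) (towerF (Term.const c) A n)

theorem Cl.inΓ {Γ : Set Formula} (hm : Maximal (Con CS) Γ)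
    {P : Set (Term × Formula)}
    (hP : ∀ x ∈ P, Formula.just x.1 x.2 ∈ Γ)
    {t : Term} {B : Formula} (h : Cl CS P t B) : Formula.just t B ∈ Γ := by
  induction h with
  | @base t A h => exact hP _ h
  | @sumL s t A _ ih =>
    have hor : ((Formula.just s A).or (Formula.just t A)) ∈ Γ := by
      show ((Formula.just s A).neg.impl (Formula.just t A)) ∈ Γ
      exact (MaxCon.impl_iff hm).2 fun hneg => absurd ih ((MaxCon.neg_iff hm).1 hneg)
    exact MaxCon.closed hm (.mp (.ax (Ax.a3 s t A)) (.hyp hor))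
  | @sumR s t A _ ih =>
    have hor : ((Formula.just s A).or (Formula.just t A)) ∈ Γ := by
      show ((Formula.just s A).neg.impl (Formula.just t A)) ∈ Γ
      exact (MaxCon.impl_iff hm).2 fun _ => ih
    exact MaxCon.closed hm (.mp (.ax (Ax.a3 s t A)) (.hyp hor))
  | @app s t A B _ _ ih1 ih2 =>
    exact MaxCon.closed hm (.mp (.mp (.ax (Ax.a2 s t A B)) (.hyp ih1)) (.hyp ih2))
  | an c A n h => exact MaxCon.closed hm (.an c A n h)

end FinCompleteness

/-- The atoms occurring at the surface (outside any `just`) of a formula. -/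
def surfA : Formula → List ℕ
  | .atom n => [n]
  | .neg B => surfA B
  | .impl B C => surfA B ++ surfA C
  | .just _ _ => []

/-- The just-subformulas occurring at the surface of a formula. -/
def surfJ : Formula → List (Term × Formula)
  | .atom _ => []
  | .neg B => surfJ B
  | .impl B C => surfJ B ++ surfJ C
  | .just t B => [(t, B)]


/-- Completeness of `J_CS` with respect to finitary models: if a formula is not
derivable in the Hilbert system `J_CS` (with constant specification `CS`),
then it fails at some world of some finitary Fitting model for `J_CS`. -/
theorem finitary_completeness_J (CS : Set Formula) (hCS : ConstSpec AxJ CS) (A : Formula)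
    (hA : ¬ DerivB AxJ CS A) :
    ∃ M : Model, IsModelJ CS M ∧ FinitaryBang CS M ∧ ∃ w : M.World, ¬ Sat M A w := by
  classical
  -- `{¬A}` is consistent.
  have hcon : Con CS {A.neg} := by
    intro hd
    apply hA
    have h1 : Dv CS ∅ (A.neg.impl Formula.falsum) := by
      apply Dv.deduction
      exact Dv.mono CS hd (by simp)
    exact Dv.toDerivB CS
      (.mp (.mp (.ax (Ax.dn A ((Formula.atom 0).impl (Formula.atom 0)))) h1) (Dv.taut CS))
  obtain ⟨Γ, hsub, hm⟩ := lindenbaum CS hcon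
  have hnegA : A.neg ∈ Γ := hsub rfl
  have hAnot : A ∉ Γ := fun h => MaxCon.noContra hm h hnegA
  -- the finite evidence base
  set P : Set (Term × Formula) := {x | x ∈ surfJ A ∧ Formula.just x.1 x.2 ∈ Γ} with hPdef
  -- the one-world model
  refine ⟨{ World := Unit, nonempty := ⟨()⟩, R := fun _ _ => False,
            E := fun t B _ => Cl CS P t B,
            val := fun n _ => n ∈ surfA A ∧ Formula.atom n ∈ Γ }, ?_, ?_, (), ?_⟩
  · -- `IsModelJ`
    refine ⟨?_, ?_, ?_⟩
    · rintro s t B w (h | h)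
      exacts [Cl.sumL h, Cl.sumR h]
    · intro s t B C w h1 h2
      exact Cl.app h1 h2
    · intro c B w n h
      exact Cl.an c B n h
  · -- `FinitaryBang`
    refine ⟨inferInstanceAs (Finite Unit), ?_, ?_⟩
    · refine ⟨(fun x : Term × Formula => (x.1, x.2, ())) '' P, ?_, ?_, ?_⟩
      · exact (((surfJ A).finite_toSet).subset (fun x hx => hx.1)).image _
      · rintro ⟨t, B, w⟩ ⟨x, hx, heq⟩
        cases heq
        exact Cl.base hx
      · intro E' hadm hBsub
        have key : ∀ {t : Term} {B : Formula}, Cl CS P t B → ∀ w : Unit, (t, B, w) ∈ E' := by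
          intro t B h
          induction h with
          | base hx => intro w; cases w; exact hBsub ⟨_, hx, rfl⟩
          | sumL _ ih => intro w; exact hadm.1 _ _ _ w (Or.inl (ih w))
          | sumR _ ih => intro w; exact hadm.1 _ _ _ w (Or.inr (ih w))
          | app _ _ ih1 ih2 => intro w; exact hadm.2.1 _ _ _ _ w (ih1 w) (ih2 w)
          | an c B n h => intro w; exact hadm.2.2 c B w n h
        rintro ⟨t, B, w⟩ h
        exact key h w
    · refine Set.Finite.subset (((surfA A).finite_toSet).image (fun n => ((), n))) ?_
      rintro ⟨w, n⟩ hv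
      exact ⟨n, hv.1, by cases w; rfl⟩
  · -- the truth lemma and the refutation of `A`
    have hClΓ : ∀ {t : Term} {B : Formula}, Cl CS P t B → Formula.just t B ∈ Γ :=
      fun h => Cl.inΓ CS hm (fun x hx => hx.2) h
    have truth : ∀ B : Formula, (∀ n ∈ surfA B, n ∈ surfA A) →
        (∀ x ∈ surfJ B, x ∈ surfJ A) →
        (Sat { World := Unit, nonempty := ⟨()⟩, R := fun _ _ => False,
               E := fun t B _ => Cl CS P t B,
               val := fun n _ => n ∈ surfA A ∧ Formula.atom n ∈ Γ } B () ↔ B ∈ Γ) := by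
      intro B
      induction B with
      | atom n =>
        intro h1 _
        simp only [Sat]
        exact ⟨fun h => h.2, fun h => ⟨h1 n (by simp [surfA]), h⟩⟩
      | neg B ih =>
        intro h1 h2
        simp only [Sat]
        rw [ih h1 h2]
        exact ⟨fun h => MaxCon.total hm h, fun h hB => MaxCon.noContra hm hB h⟩
      | impl B C ih1 ih2 =>
        intro h1 h2
        simp only [Sat]
        rw [ih1 (fun n hn => h1 n (by simp [surfA, hn])) (fun x hx => h2 x (by simp [surfJ, hx])),
          ih2 (fun n hn => h1 n (by simp [surfA, hn])) (fun x hx => h2 x (by simp [surfJ, hx]))]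
        exact (MaxCon.impl_iff hm).symm
      | just t B ih =>
        intro _ h2
        simp only [Sat]
        constructor
        · exact fun h => hClΓ h.1
        · intro h
          exact ⟨Cl.base ⟨h2 (t, B) (by simp [surfJ]), h⟩, fun v hv => hv.elim⟩
    intro hSat
    exact hAnot ((truth A (fun _ h => h) (fun _ h => h)).1 hSat)


end JustificationLogic
end
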